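/- Let (u_n)_{n≥1} be a gargantuan sequence of reals with u_n ≠ 0 for all sufficiently large n, let U(z) = ∑_{n≥1} u_n z^n, and let F be analytic in a neighborhood of 0. Define v_n = [z^n] F(U(z)) and w_n = [z^n] F'(U(z)). Then for every integer r ≥ 0, v_n = ∑_{k=0}^{r} w_k u_{n-k} + O(u_{n-r-1}) as n → ∞. -/

import Mathlib

open Filter Finset PowerSeries

/-- A sequence is *gargantuan* if `u (n-1) / u n → 0` and, for every `r`,
`∑_{k=r}^{n-r} |u k * u (n-k)| = O(|u (n-r)|)`. -/
def Gargantuan (u : ℕ → ℝ) : Prop :=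
  Tendsto (fun n => u (n - 1) / u n) atTop (nhds 0) ∧
  ∀ r : ℕ, (fun n => ∑ k ∈ Finset.Icc r (n - r), |u k * u (n - k)|)
      =O[atTop] fun n => |u (n - r)|

/-!
Replace `u` by a majorant `b` that is positive, nondecreasing and equal to `|u|` from some point
on, hence still gargantuan. Let `q` be the truncation of `U` below degree `n - r`. The tail `U - q`
is divisible by `X ^ (n - r)`, so its square does not reach degree `n`, and
`[zⁿ] U ^ k = [zⁿ] q ^ k + k [zⁿ] q ^ (k - 1) (U - q)`; summed against `c k`, the second terms give
exactly `∑_{k ≤ r} w k u (n - k)`. What is left is `∑ c k [zⁿ] q ^ k`. For each fixed `k` this is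
`O(b (n - r - 1))`, by induction on `k`: split off one factor of `q` and apply the convolution
bound of the right level. For large `k`, with `B = ∑ b n zⁿ`, the bound
`[zⁿ] B ^ (k + 1) ≤ C ^ k b (n - k)` together with `b (n - 1) = o(b n)` gives decay in `k` faster
than any geometric rate, so the positive radius of convergence of `F` makes the tail summable.
-/

open Asymptotics

namespace PowerSeries

variable {R : Type*}

theorem coeff_pow_eq_zero_of_lt [CommSemiring R] {φ : R⟦X⟧} (hφ : constantCoeff φ = 0)
    {n k : ℕ} (h : n < k) : coeff n (φ ^ k) = 0 :=
  X_pow_dvd_iff.1 (pow_dvd_pow_of_dvd (X_dvd_iff.2 hφ) k) n h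

theorem coeff_coe_trunc [CommSemiring R] (φ : R⟦X⟧) (m N : ℕ) :
    coeff m (trunc N φ : R⟦X⟧) = if m < N then coeff m φ else 0 := by
  rw [Polynomial.coeff_coe, coeff_trunc]

theorem coeff_trunc_pow_of_lt [CommSemiring R] (φ : R⟦X⟧) {j m : ℕ} (h : j < m) (k : ℕ) :
    coeff j ((trunc m φ : R⟦X⟧) ^ k) = coeff j (φ ^ k) := by
  rw [← coeff_coe_trunc_of_lt h, trunc_trunc_pow, coeff_coe_trunc_of_lt h]

theorem abs_coeff_pow_le [CommRing R] [LinearOrder R] [IsStrictOrderedRing R] {φ ψ : R⟦X⟧}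
    (h : ∀ i, |coeff i φ| ≤ coeff i ψ) (k n : ℕ) : |coeff n (φ ^ k)| ≤ coeff n (ψ ^ k) := by
  induction k generalizing n with
  | zero => rw [pow_zero, coeff_one]; split <;> simp [*]
  | succ k ih =>
    simp only [pow_succ', coeff_mul]
    refine (abs_sum_le_sum_abs _ _).trans (sum_le_sum fun p _ => ?_)
    rw [abs_mul]
    exact mul_le_mul (h _) (ih _) (abs_nonneg _) ((abs_nonneg _).trans (h _))

theorem coeff_pow_nonneg [CommRing R] [LinearOrder R] [IsStrictOrderedRing R] {φ : R⟦X⟧}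
    (h : ∀ i, 0 ≤ coeff i φ) (k n : ℕ) : 0 ≤ coeff n (φ ^ k) :=
  (abs_nonneg _).trans (abs_coeff_pow_le (fun i => (abs_of_nonneg (h i)).le) k n)

theorem abs_coeff_trunc_le [CommRing R] [LinearOrder R] [IsStrictOrderedRing R] {φ ψ : R⟦X⟧}
    (h : ∀ i, |coeff i φ| ≤ coeff i ψ) (N i : ℕ) : |coeff i (trunc N φ : R⟦X⟧)| ≤ coeff i ψ := by
  rw [coeff_coe_trunc]
  split_ifs
  exacts [h i, abs_zero.trans_le ((abs_nonneg _).trans (h i))]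

theorem abs_coeff_trunc_le_coeff_trunc [CommRing R] [LinearOrder R] [IsStrictOrderedRing R]
    {φ ψ : R⟦X⟧} (h : ∀ i, |coeff i φ| ≤ coeff i ψ) (N i : ℕ) :
    |coeff i (trunc N φ : R⟦X⟧)| ≤ coeff i (trunc N ψ : R⟦X⟧) := by
  rw [coeff_coe_trunc, coeff_coe_trunc]
  split_ifs
  exacts [h i, by rw [abs_zero]]

theorem coeff_pow_eq_coeff_trunc_pow_add [CommRing R] (φ : R⟦X⟧) {n r : ℕ} (hrn : 2 * r < n)
    (k : ℕ) : coeff n (φ ^ k) = coeff n ((trunc (n - r) φ : R⟦X⟧) ^ k) +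
      k * ∑ j ∈ range (r + 1), coeff j (φ ^ (k - 1)) * coeff (n - j) φ := by
  set q : R⟦X⟧ := ↑(trunc (n - r) φ)
  have hcoeff_q (m : ℕ) : coeff m q = if m < n - r then coeff m φ else 0 := coeff_coe_trunc φ m _
  have htail : X ^ (n - r) ∣ φ - q :=
    X_pow_dvd_iff.2 fun m hm => by rw [map_sub, hcoeff_q, if_pos hm, sub_self]
  have hsq : coeff n ((q + (φ - q)) ^ k - q ^ (k - 1) * (φ - q) * (k : R⟦X⟧) - q ^ k) = 0 := by
    refine X_pow_dvd_iff.1 ?_ n (by omega : n < (n - r) * 2)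
    rw [pow_mul]
    exact (pow_dvd_pow_of_dvd htail 2).trans (sq_dvd_add_pow_sub_sub _ _ _)
  have hlinear : coeff n (q ^ (k - 1) * (φ - q)) =
      ∑ j ∈ range (r + 1), coeff j (φ ^ (k - 1)) * coeff (n - j) φ := by
    rw [coeff_mul, Nat.sum_antidiagonal_eq_sum_range_succ_mk]
    refine (sum_subset (range_subset_range.2 (by omega)) fun j hj hjr => ?_).symm.trans
      (sum_congr rfl fun j hj => ?_)
    · simp only [mem_range] at hj hjr
      rw [map_sub, hcoeff_q, if_pos (by omega), sub_self, mul_zero]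
    · simp only [mem_range] at hj
      rw [coeff_trunc_pow_of_lt φ (by omega), map_sub, hcoeff_q, if_neg (by omega), sub_zero]
  rw [add_sub_cancel, map_sub, map_sub, ← map_natCast (C (R := R)), coeff_mul_C,
    hlinear] at hsq
  linear_combination hsq

theorem sum_coeff_pow_sub_sum_eq [CommRing R] {φ : R⟦X⟧} (hφ : constantCoeff φ = 0) (c : ℕ → R)
    {n r : ℕ} (hrn : 2 * r < n) :
    ∑ k ∈ range (n + 1), c k * coeff n (φ ^ k) -
      ∑ j ∈ range (r + 1), (∑ k ∈ range (j + 1),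
        ((k + 1 : ℕ) : R) * c (k + 1) * coeff j (φ ^ k)) * coeff (n - j) φ =
    ∑ k ∈ range (n + 1), c k * coeff n ((trunc (n - r) φ : R⟦X⟧) ^ k) := by
  have hw (j : ℕ) (hj : j ∈ range (r + 1)) : ∑ k ∈ range (j + 1),
      ((k + 1 : ℕ) : R) * c (k + 1) * coeff j (φ ^ k) =
      ∑ k ∈ range n, ((k + 1 : ℕ) : R) * c (k + 1) * coeff j (φ ^ k) := by
    simp only [mem_range] at hj
    refine sum_subset (range_subset_range.2 (by omega)) fun k _ hk => ?_
    rw [coeff_pow_eq_zero_of_lt hφ (by simpa using hk), mul_zero]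
  rw [sum_congr rfl fun j hj => congrArg (· * coeff (n - j) φ) (hw j hj)]
  simp_rw [sum_mul, coeff_pow_eq_coeff_trunc_pow_add φ hrn, mul_add,
    sum_add_distrib, sum_comm (s := range (r + 1)), mul_sum]
  rw [sum_range_succ' (fun k => ∑ j ∈ range (r + 1), _)]
  simp only [Nat.cast_zero, zero_mul, mul_zero, sum_const_zero, add_zero, add_tsub_cancel_right]
  rw [add_sub_assoc, sub_eq_zero_of_eq (sum_congr rfl fun k _ => sum_congr rfl fun j _ => by ring),
    add_zero]

theorem coeff_mk_pow_succ_le {b : ℕ → ℝ} (hb0 : b 0 = 0) (hb : ∀ n, 0 ≤ b n) {C : ℝ}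
    (hC : 0 ≤ C) (hconv : ∀ n, ∑ m ∈ Icc 1 (n - 1), b m * b (n - m) ≤ C * b (n - 1))
    (k n : ℕ) : coeff n (mk b ^ (k + 1)) ≤ C ^ k * b (n - k) := by
  induction k generalizing n with
  | zero => simp
  | succ k ih =>
    rw [pow_succ', coeff_mul, Nat.sum_antidiagonal_eq_sum_range_succ_mk]
    calc ∑ m ∈ range (n + 1), coeff m (mk b) * coeff (n - m) (mk b ^ (k + 1))
        ≤ ∑ m ∈ range (n + 1), C ^ k * (b m * b (n - k - m)) := sum_le_sum fun m _ => by
          rw [coeff_mk, Nat.sub_right_comm, mul_left_comm]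
          exact mul_le_mul_of_nonneg_left (ih _) (hb m)
      _ = C ^ k * ∑ m ∈ Icc 1 (n - k - 1), b m * b (n - k - m) := by
          rw [← mul_sum]
          refine congrArg _ (sum_subset (fun m hm => ?_) fun m _ hm => ?_).symm
          · simp only [mem_Icc, mem_range] at hm ⊢
            omega
          · rcases Nat.eq_zero_or_pos m with rfl | hm0
            · rw [hb0, zero_mul]
            · simp only [mem_Icc, not_and, not_le] at hm
              rw [show n - k - m = 0 by omega, hb0, mul_zero]
      _ ≤ C ^ (k + 1) * b (n - (k + 1)) := by
          rw [pow_succ, mul_assoc, Nat.sub_sub]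
          exact mul_le_mul_of_nonneg_left (hconv _) (pow_nonneg hC k)

end PowerSeries

namespace Gargantuan

variable {u : ℕ → ℝ}

theorem eventually_abs_le_mul (hu : Gargantuan u) (hne : ∀ᶠ n in atTop, u n ≠ 0) {ε : ℝ}
    (hε : 0 < ε) : ∀ᶠ n in atTop, |u n| ≤ ε * |u (n + 1)| := by
  have hratio : Tendsto (fun n => |u n / u (n + 1)|) atTop (nhds 0) := by
    simpa using (hu.1.comp (tendsto_add_atTop_nat 1)).abs
  filter_upwards [hratio.eventually_lt_const hε, (tendsto_add_atTop_nat 1).eventually hne]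
    with n hlt hne
  rw [abs_div, div_lt_iff₀ (abs_pos.2 hne)] at hlt
  exact hlt.le

theorem tendsto_abs_atTop (hu : Gargantuan u) (hne : ∀ᶠ n in atTop, u n ≠ 0) :
    Tendsto (fun n => |u n|) atTop atTop := by
  obtain ⟨N, hN⟩ := eventually_atTop.1 ((hu.eventually_abs_le_mul hne one_half_pos).and hne)
  refine (tendsto_add_atTop_iff_nat N).1 (tendsto_atTop_of_geom_le (c := 2)
    (abs_pos.2 (by simpa using (hN N le_rfl).2)) one_lt_two fun n => ?_)
  have := (hN (n + N) (by omega)).1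
  rw [show n + 1 + N = n + N + 1 by omega]
  linarith

theorem sum_Icc_abs_mul_le {b : ℕ → ℝ} (hb : Monotone b) (hub : ∀ n, |u n| ≤ b n) {N : ℕ}
    (hN : ∀ n, N ≤ n → |u n| = b n) (s n : ℕ) :
    ∑ m ∈ Icc s (n - s), |b m * b (n - m)| ≤ ∑ m ∈ Icc s (n - s), |u m * u (n - m)| +
      2 * (∑ m ∈ range N, (b m - |u m|)) * b (n - s) := by
  set d : ℕ → ℝ := fun m => b m - |u m|
  have hd (m : ℕ) : 0 ≤ d m := sub_nonneg.2 (hub m)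
  have hdsum (T : Finset ℕ) : ∑ m ∈ T, d m ≤ ∑ m ∈ range N, d m := by
    rw [← sum_filter_of_ne (p := (· < N)) fun m _ hm => ?_]
    · exact sum_le_sum_of_subset_of_nonneg (fun m hm => mem_range.2 (mem_filter.1 hm).2)
        fun m _ _ => hd m
    · by_contra hmN
      exact hm (sub_eq_zero.2 (hN m (not_lt.1 hmN)).symm)
  have hb0 (n : ℕ) : 0 ≤ b n := (abs_nonneg _).trans (hub n)
  have hterm (m : ℕ) (hm : m ∈ Icc s (n - s)) : |b m * b (n - m)| ≤
      |u m * u (n - m)| + b (n - s) * d (n - m) + b (n - s) * d m := by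
    simp only [mem_Icc] at hm
    have h1 : b m ≤ b (n - s) := hb hm.2
    have h2 : b (n - m) ≤ b (n - s) := hb (by omega)
    rw [abs_mul, abs_mul, abs_of_nonneg (hb0 _), abs_of_nonneg (hb0 _)]
    nlinarith [hd m, hd (n - m), abs_nonneg (u m), hub m]
  refine (sum_le_sum hterm).trans ?_
  rw [sum_add_distrib, sum_add_distrib, ← mul_sum, ← mul_sum, ← sum_image (g := (n - ·))
    fun i hi j hj hij => by simp only [coe_Icc, Set.mem_Icc] at hi hj hij; omega]
  nlinarith [hdsum (image (n - ·) (Icc s (n - s))), hdsum (Icc s (n - s)), hb0 (n - s)]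

theorem of_eventuallyEq_abs (hu : Gargantuan u) {b : ℕ → ℝ} (hb : Monotone b)
    (hub : ∀ n, |u n| ≤ b n) (heq : (fun n => |u n|) =ᶠ[atTop] b) : Gargantuan b := by
  refine ⟨?_, fun s => ?_⟩
  · have hratio : Tendsto (fun n => |u (n - 1)| / |u n|) atTop (nhds 0) := by
      simpa [abs_div] using hu.1.abs
    refine hratio.congr' ?_
    filter_upwards [heq, (tendsto_sub_atTop_nat 1).eventually heq] with n h h'
    rw [h, ← h']
  obtain ⟨N, hN⟩ := eventually_atTop.1 heq
  have hmain : (fun n => ∑ m ∈ Icc s (n - s), |u m * u (n - m)| +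
      2 * (∑ m ∈ range N, (b m - |u m|)) * b (n - s)) =O[atTop] fun n => |b (n - s)| := by
    refine IsBigO.add ?_ ((isBigO_abs_right.2 (isBigO_refl _ _)).const_mul_left _)
    refine (hu.2 s).trans (EventuallyEq.isBigO ?_)
    filter_upwards [(tendsto_sub_atTop_nat s).eventually heq] with n h
    rw [← h, abs_abs]
  refine IsBigO.trans (IsBigO.of_bound' (Eventually.of_forall fun n => ?_)) hmain
  rw [Real.norm_eq_abs, Real.norm_eq_abs, abs_of_nonneg (sum_nonneg fun _ _ => abs_nonneg _)]
  exact (sum_Icc_abs_mul_le hb hub hN s n).trans (le_abs_self _)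

end Gargantuan

structure MonotoneGargantuan (b : ℕ → ℝ) : Prop where
  gargantuan : Gargantuan b
  monotone : Monotone b
  map_zero : b 0 = 0
  pos : ∀ n, 0 < n → 0 < b n

theorem Gargantuan.exists_monotoneGargantuan_majorant {u : ℕ → ℝ} (hu : Gargantuan u)
    (hu0 : u 0 = 0) (hne : ∀ᶠ n in atTop, u n ≠ 0) :
    ∃ b, MonotoneGargantuan b ∧ (∀ n, |u n| ≤ b n) ∧ (fun n => |u n|) =ᶠ[atTop] b := by
  obtain ⟨N, hN⟩ := eventually_atTop.1 (hu.eventually_abs_le_mul hne one_pos)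
  set M := 1 + ∑ j ∈ range N, |u j|
  have hM (j : ℕ) (hj : j < N) : |u j| ≤ M := by
    have := single_le_sum (fun i _ => abs_nonneg (u i)) (mem_range.2 hj)
    linarith
  set b : ℕ → ℝ := fun n => if n = 0 then 0 else max M |u n|
  have hM1 : 1 ≤ M := le_add_of_nonneg_right (sum_nonneg fun _ _ => abs_nonneg _)
  have hmono : Monotone b := monotone_nat_of_le_succ fun n => by
    rcases Nat.eq_zero_or_pos n with rfl | hn
    · simp [b]
    simp only [b, if_neg hn.ne', Nat.succ_ne_zero, if_false]
    rcases lt_or_ge n N with hnN | hnN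
    · rw [max_eq_left (hM n hnN)]
      exact le_max_left _ _
    · exact max_le_max le_rfl (by simpa using hN n hnN)
  have hub (n : ℕ) : |u n| ≤ b n := by
    rcases Nat.eq_zero_or_pos n with rfl | hn
    · simp [b, hu0]
    · simp [b, hn.ne']
  have heq : (fun n => |u n|) =ᶠ[atTop] b := by
    filter_upwards [(hu.tendsto_abs_atTop hne).eventually_ge_atTop M, eventually_gt_atTop 0]
      with n hn hpos
    simp [b, hpos.ne', hn]
  refine ⟨b, ⟨hu.of_eventuallyEq_abs hmono hub heq, hmono, by simp [b], fun n hn => ?_⟩, hub, heq⟩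
  simp only [b, if_neg hn.ne']
  exact lt_max_of_lt_left (by linarith)

namespace MonotoneGargantuan

variable {b : ℕ → ℝ}

theorem nonneg (hb : MonotoneGargantuan b) (n : ℕ) : 0 ≤ b n :=
  hb.map_zero ▸ hb.monotone (Nat.zero_le n)

theorem isBigO_sum (hb : MonotoneGargantuan b) (s : ℕ) :
    (fun n => ∑ m ∈ Icc s (n - s), b m * b (n - m)) =O[atTop] fun n => b (n - s) := by
  simpa [abs_of_nonneg, hb.nonneg, mul_nonneg] using hb.gargantuan.2 s

theorem exists_forall_sum_le (hb : MonotoneGargantuan b) :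
    ∃ C, 0 < C ∧ ∀ n, ∑ m ∈ Icc 1 (n - 1), b m * b (n - m) ≤ C * b (n - 1) := by
  obtain ⟨C, hC, hbound⟩ := bound_of_isBigO_nat_atTop (hb.isBigO_sum 1)
  refine ⟨C, hC, fun n => ?_⟩
  rcases le_or_gt n 1 with hn | hn
  · rw [Icc_eq_empty (by omega), sum_empty]
    exact mul_nonneg hC.le (hb.nonneg _)
  · have := hbound (hb.pos (n - 1) (by omega)).ne'
    rwa [Real.norm_eq_abs, Real.norm_eq_abs, abs_of_nonneg (hb.nonneg _),
      abs_of_nonneg (sum_nonneg fun m _ => mul_nonneg (hb.nonneg _) (hb.nonneg _))] at this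

theorem exists_le_mul_pow (hb : MonotoneGargantuan b) {ε : ℝ} (hε : 0 < ε) :
    ∃ A, 0 ≤ A ∧ ∀ i j, i ≤ j → b i ≤ A * ε ^ (j - i) * b j := by
  set ε' := min ε 1
  have hε' : 0 < ε' := lt_min hε one_pos
  have hne : ∀ᶠ n in atTop, b n ≠ 0 :=
    (eventually_gt_atTop 0).mono fun n hn => (hb.pos n hn).ne'
  obtain ⟨N, hN⟩ := eventually_atTop.1 (hb.gargantuan.eventually_abs_le_mul hne hε')
  have hshift (i j : ℕ) (hij : i ≤ j) : b i ≤ ε' ^ (j - i - N) * b j := by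
    induction j, hij using Nat.le_induction with
    | base => simp
    | succ j hij ih =>
      rcases le_or_gt (j + 1 - i) N with h | h
      · rw [Nat.sub_eq_zero_of_le h, pow_zero, one_mul]
        exact hb.monotone (by omega)
      · have hstep := hN j (by omega)
        rw [abs_of_nonneg (hb.nonneg _), abs_of_nonneg (hb.nonneg _)] at hstep
        rw [show j + 1 - i - N = j - i - N + 1 by omega, pow_succ, mul_assoc]
        exact ih.trans (mul_le_mul_of_nonneg_left hstep (by positivity))
  refine ⟨ε'⁻¹ ^ N, by positivity, fun i j hij =>
    (hshift i j hij).trans (mul_le_mul_of_nonneg_right ?_ (hb.nonneg j))⟩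
  calc ε' ^ (j - i - N) = ε'⁻¹ ^ N * ε' ^ (N + (j - i - N)) := by
        rw [pow_add, ← mul_assoc, ← mul_pow, inv_mul_cancel₀ hε'.ne', one_pow, one_mul]
    _ ≤ ε'⁻¹ ^ N * ε' ^ (j - i) := mul_le_mul_of_nonneg_left
        (pow_le_pow_of_le_one hε'.le (min_le_right _ _) (by omega)) (by positivity)
    _ ≤ ε'⁻¹ ^ N * ε ^ (j - i) := mul_le_mul_of_nonneg_left
        (pow_le_pow_left₀ hε'.le (min_le_left _ _) _) (by positivity)

theorem exists_coeff_pow_le (hb : MonotoneGargantuan b) (k : ℕ) :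
    ∃ D, 0 ≤ D ∧ ∀ j, 0 < j → coeff j (PowerSeries.mk b ^ k) ≤ D * b j := by
  rcases k with _ | k
  · exact ⟨0, le_rfl, fun j hj => by simp [coeff_one, hj.ne']⟩
  obtain ⟨C, hC, hconv⟩ := hb.exists_forall_sum_le
  exact ⟨C ^ k, by positivity, fun j _ => (coeff_mk_pow_succ_le hb.map_zero hb.nonneg hC.le hconv
    k j).trans (mul_le_mul_of_nonneg_left (hb.monotone (Nat.sub_le _ _)) (by positivity))⟩

theorem exists_coeff_pow_le_mul_pow (hb : MonotoneGargantuan b) (r : ℕ) {δ : ℝ} (hδ : 0 < δ) :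
    ∃ A, 0 ≤ A ∧ ∀ n k, r + 2 ≤ k →
      coeff n (PowerSeries.mk b ^ k) ≤ A * δ ^ k * b (n - (r + 1)) := by
  obtain ⟨C, hC, hconv⟩ := hb.exists_forall_sum_le
  obtain ⟨A, hA, hgeom⟩ := hb.exists_le_mul_pow (div_pos hδ hC)
  refine ⟨A * C ^ (r + 1) / δ ^ (r + 2), by positivity, fun n k hk => ?_⟩
  obtain ⟨m, rfl⟩ := Nat.exists_eq_add_of_le hk
  have hdecay : b (n - (r + 1 + m)) ≤ A * (δ / C) ^ m * b (n - (r + 1)) := by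
    rcases le_or_gt (r + 1 + m) n with h | h
    · simpa [show n - (r + 1) - (n - (r + 1 + m)) = m by omega] using
        hgeom (n - (r + 1 + m)) (n - (r + 1)) (by omega)
    · rw [show n - (r + 1 + m) = 0 by omega, hb.map_zero]
      exact mul_nonneg (by positivity) (hb.nonneg _)
  calc coeff n (PowerSeries.mk b ^ (r + 2 + m)) ≤ C ^ (r + 1 + m) * b (n - (r + 1 + m)) := by
        rw [show r + 2 + m = r + 1 + m + 1 by omega]
        exact coeff_mk_pow_succ_le hb.map_zero hb.nonneg hC.le hconv (r + 1 + m) n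
    _ ≤ C ^ (r + 1 + m) * (A * (δ / C) ^ m * b (n - (r + 1))) :=
        mul_le_mul_of_nonneg_left hdecay (by positivity)
    _ = A * C ^ (r + 1) / δ ^ (r + 2) * δ ^ (r + 2 + m) * b (n - (r + 1)) := by
        rw [div_pow, pow_add C, pow_add δ]
        field_simp
        ring

theorem isBigO_sum_Ico_coeff_trunc_mul (hb : MonotoneGargantuan b) (k s : ℕ) :
    (fun n => ∑ m ∈ Ico (s + 1) (n + 1), coeff m (trunc (n - s) (PowerSeries.mk b) : ℝ⟦X⟧) *
        coeff (n - m) ((trunc (n - s) (PowerSeries.mk b) : ℝ⟦X⟧) ^ k)) =O[atTop]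
      fun n => b (n - (s + 1)) := by
  have hB (i : ℕ) : |coeff i (PowerSeries.mk b)| ≤ coeff i (PowerSeries.mk b) := by
    rw [coeff_mk, abs_of_nonneg (hb.nonneg i)]
  obtain ⟨D, hD, hDb⟩ := hb.exists_coeff_pow_le k
  obtain ⟨C, hC⟩ := (hb.isBigO_sum (s + 1)).bound
  refine IsBigO.of_bound (D * C) ?_
  filter_upwards [hC, eventually_gt_atTop s] with n hCn hn
  set Q : ℝ⟦X⟧ := ↑(trunc (n - s) (PowerSeries.mk b))
  have hQ (i : ℕ) : 0 ≤ coeff i Q := (abs_nonneg _).trans (abs_coeff_trunc_le_coeff_trunc hB _ i)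
  rw [Real.norm_eq_abs, Real.norm_eq_abs, abs_of_nonneg (hb.nonneg _), abs_of_nonneg
    (sum_nonneg fun m _ => mul_nonneg (hb.nonneg _) (hb.nonneg _))] at hCn
  rw [Real.norm_eq_abs, Real.norm_eq_abs, abs_of_nonneg (hb.nonneg _), abs_of_nonneg
    (sum_nonneg fun m _ => mul_nonneg (hQ m) (coeff_pow_nonneg hQ k _))]
  have hterm (m : ℕ) (hm : m ∈ Ico (s + 1) (n + 1)) : coeff m Q * coeff (n - m) (Q ^ k) ≤
      if m ∈ Icc (s + 1) (n - (s + 1)) then D * (b m * b (n - m)) else 0 := by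
    rw [coeff_coe_trunc, coeff_mk]
    simp only [mem_Ico, mem_Icc] at hm ⊢
    split_ifs with h1 h2 h2
    · rw [mul_left_comm]
      exact mul_le_mul_of_nonneg_left ((le_abs_self _).trans ((abs_coeff_pow_le
        (abs_coeff_trunc_le hB _) k _).trans (hDb _ (by omega)))) (hb.nonneg m)
    · omega
    · omega
    · rw [zero_mul]
  calc _ ≤ _ := sum_le_sum hterm
    _ = D * ∑ m ∈ Icc (s + 1) (n - (s + 1)), b m * b (n - m) := by
      rw [← sum_filter, ← mul_sum]
      congr 2
      ext m
      simp only [mem_filter, mem_Ico, mem_Icc]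
      omega
    _ ≤ D * C * b (n - (s + 1)) := by
      rw [mul_assoc]
      exact mul_le_mul_of_nonneg_left hCn hD

theorem isBigO_coeff_trunc_pow (hb : MonotoneGargantuan b) (k s : ℕ) :
    (fun n => coeff n ((trunc (n - s) (PowerSeries.mk b) : ℝ⟦X⟧) ^ k)) =O[atTop]
      fun n => b (n - (s + 1)) := by
  induction k generalizing s with
  | zero =>
    refine (isBigO_zero _ _).congr' ?_ EventuallyEq.rfl
    filter_upwards [eventually_gt_atTop 0] with n hn
    simp [coeff_one, hn.ne']
  | succ k ih =>
    set Q : ℕ → ℝ⟦X⟧ := fun n => trunc (n - s) (PowerSeries.mk b)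
    have hsplit : (fun n => coeff n (Q n ^ (k + 1))) =ᶠ[atTop] fun n =>
        ∑ m ∈ range (s + 1), b m * coeff (n - m) (Q n ^ k) +
          ∑ m ∈ Ico (s + 1) (n + 1), coeff m (Q n) * coeff (n - m) (Q n ^ k) := by
      filter_upwards [eventually_gt_atTop (2 * s)] with n hn
      rw [pow_succ', coeff_mul, Nat.sum_antidiagonal_eq_sum_range_succ_mk,
        ← sum_range_add_sum_Ico _ (by omega : s + 1 ≤ n + 1)]
      refine congrArg (· + _) (sum_congr rfl fun m hm => ?_)
      rw [mem_range] at hm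
      rw [coeff_coe_trunc, coeff_mk, if_pos (by omega)]
    -- The `m`-th low term is the same quantity at level `s - m`, evaluated at `n - m`.
    have hlow : (fun n => ∑ m ∈ range (s + 1), b m * coeff (n - m) (Q n ^ k)) =O[atTop]
        fun n => b (n - (s + 1)) := by
      refine IsBigO.fun_sum fun m hm => ?_
      refine IsBigO.const_mul_left (f := fun n => coeff (n - m) (Q n ^ k)) ?_ (b m)
      rw [mem_range] at hm
      refine ((ih (s - m)).comp_tendsto (tendsto_sub_atTop_nat m)).congr' ?_ ?_ <;>
        filter_upwards [eventually_ge_atTop s] with n hn <;>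
        simp only [Function.comp, Q, show n - m - (s - m) = n - s by omega,
          show n - m - (s - m + 1) = n - (s + 1) by omega]
    exact (hlow.add (hb.isBigO_sum_Ico_coeff_trunc_mul k s)).congr' hsplit.symm EventuallyEq.rfl

theorem isBigO_sum_coeff_trunc_pow {u c : ℕ → ℝ} (hb : MonotoneGargantuan b)
    (hub : ∀ n, |u n| ≤ b n) {ρ : ℝ} (hρ : 0 < ρ) (hc : Summable fun k => |c k| * ρ ^ k)
    (r : ℕ) :
    (fun n => ∑ k ∈ range (n + 1), c k * coeff n ((trunc (n - r) (PowerSeries.mk u) : ℝ⟦X⟧) ^ k))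
      =O[atTop] fun n => b (n - (r + 1)) := by
  set q : ℕ → ℝ⟦X⟧ := fun n => trunc (n - r) (PowerSeries.mk u)
  set Q : ℕ → ℝ⟦X⟧ := fun n => trunc (n - r) (PowerSeries.mk b)
  have hub' (i : ℕ) : |coeff i (PowerSeries.mk u)| ≤ coeff i (PowerSeries.mk b) := by
    simpa only [coeff_mk] using hub i
  have hqQ (n k : ℕ) : |coeff n (q n ^ k)| ≤ coeff n (Q n ^ k) :=
    abs_coeff_pow_le (abs_coeff_trunc_le_coeff_trunc hub' _) k n
  have hqB (n k : ℕ) : |coeff n (q n ^ k)| ≤ coeff n (PowerSeries.mk b ^ k) :=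
    abs_coeff_pow_le (abs_coeff_trunc_le hub' _) k n
  obtain ⟨A, hA, hAB⟩ := hb.exists_coeff_pow_le_mul_pow r hρ
  set S := ∑' k, |c k| * ρ ^ k
  have hhead : (fun n => ∑ k ∈ range (r + 2), |c k| * coeff n (Q n ^ k)) =O[atTop]
      fun n => b (n - (r + 1)) :=
    IsBigO.fun_sum fun k _ => (hb.isBigO_coeff_trunc_pow k r).const_mul_left _
  refine IsBigO.trans (IsBigO.of_bound' ?_) (hhead.add ((isBigO_refl _ _).const_mul_left (A * S)))
  filter_upwards [eventually_ge_atTop (r + 1)] with n hn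
  rw [Real.norm_eq_abs, Real.norm_eq_abs, ← sum_range_add_sum_Ico _ (by omega : r + 2 ≤ n + 1)]
  refine (abs_add_le _ _).trans ((add_le_add ?_ ?_).trans (le_abs_self _))
  · refine (abs_sum_le_sum_abs _ _).trans (sum_le_sum fun k _ => ?_)
    rw [abs_mul]
    exact mul_le_mul_of_nonneg_left (hqQ n k) (abs_nonneg _)
  · calc _ ≤ ∑ k ∈ Ico (r + 2) (n + 1), |c k| * (A * ρ ^ k * b (n - (r + 1))) :=
          (abs_sum_le_sum_abs _ _).trans (sum_le_sum fun k hk => by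
            rw [abs_mul]
            exact mul_le_mul_of_nonneg_left ((hqB n k).trans (hAB n k (mem_Ico.1 hk).1))
              (abs_nonneg _))
      _ = A * b (n - (r + 1)) * ∑ k ∈ Ico (r + 2) (n + 1), |c k| * ρ ^ k := by
          rw [mul_sum]
          exact sum_congr rfl fun k _ => by ring
      _ ≤ A * b (n - (r + 1)) * S := mul_le_mul_of_nonneg_left
          (hc.sum_le_tsum _ fun k _ => by positivity) (mul_nonneg hA (hb.nonneg _))
      _ = A * S * b (n - (r + 1)) := by ring

end MonotoneGargantuan

/-- **Bender's theorem** (simplified form). Let `(u n)` be gargantuan with `u 0 = 0`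
and `u n ≠ 0` for all large `n`, let `U(z) = ∑_{n≥1} u n zⁿ`, and let
`F(x) = ∑_k c k x^k` be analytic near `0`. With `v n = [zⁿ] F(U(z))` and
`w n = [zⁿ] F'(U(z))` (expressed by the finite coefficientwise sums below, since
`U` has zero constant term), for every `r ≥ 0` we have
`v n = ∑_{k=0}^{r} w k * u (n-k) + O(u (n-r-1))`. -/
theorem bender (u : ℕ → ℝ) (hu0 : u 0 = 0) (hgarg : Gargantuan u)
    (hne : ∀ᶠ n in atTop, u n ≠ 0)
    (c : ℕ → ℝ) (hanalytic : ∃ ρ : ℝ, 0 < ρ ∧ Summable fun k => |c k| * ρ ^ k)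
    (v w : ℕ → ℝ)
    (hv : ∀ n, v n = ∑ k ∈ Finset.range (n + 1),
      c k * PowerSeries.coeff (R := ℝ) n ((PowerSeries.mk u) ^ k))
    (hw : ∀ n, w n = ∑ k ∈ Finset.range (n + 1),
      ((k + 1 : ℕ) : ℝ) * c (k + 1) * PowerSeries.coeff (R := ℝ) n ((PowerSeries.mk u) ^ k)) :
    ∀ r : ℕ,
      (fun n => v n - ∑ k ∈ Finset.range (r + 1), w k * u (n - k))
        =O[atTop] fun n => u (n - (r + 1)) := by
  obtain ⟨b, hb, hub, hb_eq⟩ := hgarg.exists_monotoneGargantuan_majorant hu0 hne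
  obtain ⟨ρ, hρ, hc⟩ := hanalytic
  intro r
  have hbu : (fun n => b (n - (r + 1))) =O[atTop] fun n => u (n - (r + 1)) :=
    (hb_eq.comp_tendsto (tendsto_sub_atTop_nat (r + 1))).symm.isBigO.trans
      (isBigO_abs_left.2 (isBigO_refl _ _))
  refine ((hb.isBigO_sum_coeff_trunc_pow hub hρ hc r).congr' ?_ EventuallyEq.rfl).trans hbu
  filter_upwards [eventually_gt_atTop (2 * r)] with n hn
  have hu0' : constantCoeff (PowerSeries.mk u) = 0 := by simpa using hu0
  simp only [← sum_coeff_pow_sub_sum_eq hu0' c hn, hv, hw, coeff_mk]
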